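/- arXiv:1506.04681 — 2 statements merged into one kernel-verified Lean document; each statement's English description precedes it below -/
import Mathlib

section
/- Let h_1, ..., h_n : ℝ → ℝ be convex, continuously differentiable functions and let f ≤ n. The function G(x) = max over subsets F₂ ⊆ B(x) with |F₂| ≤ f of Σ_{i ∈ B(x) − F₂} h_i'(x), where B(x) = {i : h_i'(x) < 0}, is continuous on ℝ. -/
open scoped Classical

/-!
Write `d i = h_i'(x)`. Replacing `d i` by `min (d i) 0` lets the sum range over all indices
outside `F₂` instead of over `B(x) - F₂`, and enlarging `F₂` beyond `B(x)` changes nothing, so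
`G(x)` is the maximum, over the finitely many `F` with `|F| ≤ f`, of `∑_{i ∉ F} min (h_i'(x)) 0`.
Each of these is continuous since the `h_i'` are, and a finite maximum of continuous functions
is continuous.
-/

open Finset

section TrimmedNegSum

variable {ι : Type*} [DecidableEq ι]

theorem sum_filter_neg_sdiff_eq_sum_min (s F : Finset ι) (d : ι → ℝ) :
    ∑ i ∈ s.filter (d · < 0) \ F, d i = ∑ i ∈ s \ F, min (d i) 0 := by
  have hset : s.filter (d · < 0) \ F = (s \ F).filter (d · < 0) := by
    ext i
    simp only [mem_sdiff, mem_filter]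
    tauto
  rw [hset, sum_filter]
  refine sum_congr rfl fun i _ => ?_
  split_ifs with hi
  · exact (min_eq_left hi.le).symm
  · exact (min_eq_right (not_lt.1 hi)).symm

variable [Fintype ι]

noncomputable def trimmedNegSum (f : ℕ) (d : ι → ℝ) : ℝ :=
  (univ.filter fun F : Finset ι => F.card ≤ f).sup' ⟨∅, by simp⟩
    fun F => ∑ i ∈ univ \ F, min (d i) 0

theorem isGreatest_trimmedNegSum (f : ℕ) (d : ι → ℝ) :
    IsGreatest {s : ℝ | ∃ F₂ : Finset ι, F₂ ⊆ univ.filter (d · < 0) ∧ F₂.card ≤ f ∧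
      s = ∑ i ∈ univ.filter (d · < 0) \ F₂, d i} (trimmedNegSum f d) := by
  constructor
  · obtain ⟨F, hF, hmax⟩ := exists_mem_eq_sup' (s := univ.filter fun F : Finset ι => F.card ≤ f)
      ⟨∅, by simp⟩ fun F => ∑ i ∈ univ \ F, min (d i) 0
    have hFcard : F.card ≤ f := (mem_filter.1 hF).2
    refine ⟨F ∩ univ.filter (d · < 0), inter_subset_right,
      (card_le_card inter_subset_left).trans hFcard, ?_⟩
    rw [sdiff_inter_self_right, sum_filter_neg_sdiff_eq_sum_min]
    exact hmax
  · rintro s ⟨F₂, -, hcard, rfl⟩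
    rw [sum_filter_neg_sdiff_eq_sum_min]
    exact le_sup' (fun F => ∑ i ∈ univ \ F, min (d i) 0) (mem_filter.2 ⟨mem_univ _, hcard⟩)

theorem continuous_trimmedNegSum {X : Type*} [TopologicalSpace X] (f : ℕ) {d : ι → X → ℝ}
    (hd : ∀ i, Continuous (d i)) : Continuous fun x => trimmedNegSum f fun i => d i x :=
  Continuous.finset_sup'_apply _ fun _ _ =>
    continuous_finsetSum _ fun i _ => (hd i).min continuous_const

end TrimmedNegSum

theorem trimmed_negative_gradient_sum_continuous_general
    (n f : ℕ) (h : Fin n → ℝ → ℝ)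
    (hsmooth : ∀ i, ContDiff ℝ 1 (h i))
    (G : ℝ → ℝ)
    (hG : ∀ x : ℝ,
      IsGreatest {s : ℝ | ∃ F₂ : Finset (Fin n),
        F₂ ⊆ Finset.univ.filter (fun i => deriv (h i) x < 0) ∧ F₂.card ≤ f ∧
        s = ∑ i ∈ (Finset.univ.filter (fun i => deriv (h i) x < 0)) \ F₂, deriv (h i) x}
        (G x)) :
    Continuous G := by
  have hG_eq : G = fun x => trimmedNegSum f fun i => deriv (h i) x :=
    funext fun x => (hG x).unique (isGreatest_trimmedNegSum f _)
  rw [hG_eq]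
  exact continuous_trimmedNegSum f fun i => (hsmooth i).continuous_deriv le_rfl

theorem trimmed_negative_gradient_sum_continuous
    (n f : ℕ) (hf : f ≤ n) (h : Fin n → ℝ → ℝ)
    (hconv : ∀ i, ConvexOn ℝ Set.univ (h i))
    (hsmooth : ∀ i, ContDiff ℝ 1 (h i))
    (G : ℝ → ℝ)
    (hG : ∀ x : ℝ,
      IsGreatest {s : ℝ | ∃ F₂ : Finset (Fin n),
        F₂ ⊆ Finset.univ.filter (fun i => deriv (h i) x < 0) ∧ F₂.card ≤ f ∧
        s = ∑ i ∈ (Finset.univ.filter (fun i => deriv (h i) x < 0)) \ F₂, deriv (h i) x}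
        (G x)) :
    Continuous G :=
  trimmed_negative_gradient_sum_continuous_general n f h hsmooth G hG
end

section
/- Let h_1, ..., h_n : ℝ → ℝ be convex, continuously differentiable functions, each with a nonempty compact set of minimizers, and suppose n > 3f. For 1 ≤ K ≤ n, let g_K(x) be the K-th largest value in the multiset {h_1'(x), ..., h_n'(x)}. Then there exists x̃ ∈ ℝ such that Σ_{K=f+1}^{n−f} g_K(x̃) = 0. -/
/-!
Each `h i` is convex with a minimiser, so its derivative is monotone and vanishes somewhere;
hence there are points `a`, `b` with all derivatives `≤ 0` at `a` and `≥ 0` at `b`. Every ranked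
derivative `g K`, and so the middle-rank sum, is then `≤ 0` at `a` and `≥ 0` at `b`. An order
statistic is 1-Lipschitz in the sup norm of the data, so `g K` is continuous, and the intermediate
value theorem gives a zero of the sum between `a` and `b`.
-/

open Finset Filter

section KthLargest

variable {ι : Type*} [Fintype ι]

def IsKthLargest (d : ι → ℝ) (K : ℕ) (v : ℝ) : Prop :=
  K ≤ (univ.filter fun i => v ≤ d i).card ∧ (univ.filter fun i => v < d i).card < K

variable {d d' : ι → ℝ} {K : ℕ} {v v' : ℝ}

theorem IsKthLargest.le_of_le_card (hv : IsKthLargest d K v) {c : ℝ}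
    (hc : K ≤ (univ.filter fun i => c ≤ d i).card) : c ≤ v := by
  by_contra! hlt
  have hsub : (univ.filter fun i => c ≤ d i) ⊆ univ.filter fun i => v < d i :=
    monotone_filter_right _ fun i _ hi => hlt.trans_le hi
  exact (hc.trans (card_le_card hsub)).not_gt hv.2

theorem IsKthLargest.le_of_card_lt (hv : IsKthLargest d K v) {c : ℝ}
    (hc : (univ.filter fun i => c < d i).card < K) : v ≤ c := by
  by_contra! hlt
  have hsub : (univ.filter fun i => v ≤ d i) ⊆ univ.filter fun i => c < d i :=
    monotone_filter_right _ fun i _ hi => hlt.trans_le hi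
  exact (hv.1.trans (card_le_card hsub)).not_gt hc

theorem IsKthLargest.nonpos (hv : IsKthLargest d K v) (hK : 0 < K) (hd : ∀ i, d i ≤ 0) :
    v ≤ 0 :=
  hv.le_of_card_lt <| by
    rwa [filter_false_of_mem fun i _ => (hd i).not_gt, card_empty]

theorem IsKthLargest.nonneg (hv : IsKthLargest d K v) (hK : K ≤ Fintype.card ι)
    (hd : ∀ i, 0 ≤ d i) : 0 ≤ v :=
  hv.le_of_le_card <| by rwa [filter_true_of_mem fun i _ => hd i, card_univ]

theorem IsKthLargest.sub_le_of_forall_abs_sub_le (hv : IsKthLargest d K v)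
    (hv' : IsKthLargest d' K v') {ε : ℝ} (hε : ∀ i, |d i - d' i| ≤ ε) : v' - ε ≤ v := by
  refine hv.le_of_le_card (hv'.1.trans (card_le_card ?_))
  exact monotone_filter_right _ fun i _ (hi : v' ≤ d' i) => by linarith [(abs_le.1 (hε i)).1]

theorem IsKthLargest.le_add_of_forall_abs_sub_le (hv : IsKthLargest d K v)
    (hv' : IsKthLargest d' K v') {ε : ℝ} (hε : ∀ i, |d i - d' i| ≤ ε) : v ≤ v' + ε := by
  refine hv.le_of_card_lt ((card_le_card ?_).trans_lt hv'.2)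
  exact monotone_filter_right _ fun i _ (hi : v' + ε < d i) => by linarith [(abs_le.1 (hε i)).2]

theorem IsKthLargest.dist_le (hv : IsKthLargest d K v) (hv' : IsKthLargest d' K v') :
    dist v v' ≤ dist d d' := by
  have hε : ∀ i, |d i - d' i| ≤ dist d d' := fun i => dist_le_pi_dist d d' i
  rw [Real.dist_eq, abs_sub_le_iff]
  constructor
  · linarith [hv.le_add_of_forall_abs_sub_le hv' hε]
  · linarith [hv.sub_le_of_forall_abs_sub_le hv' hε]

theorem continuous_of_isKthLargest {X : Type*} [TopologicalSpace X] {D : X → ι → ℝ}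
    {w : X → ℝ} (hD : Continuous D) (hw : ∀ x, IsKthLargest (D x) K (w x)) :
    Continuous w := by
  refine continuous_iff_continuousAt.2 fun x => tendsto_iff_dist_tendsto_zero.2 ?_
  exact squeeze_zero (fun _ => dist_nonneg) (fun y => (hw y).dist_le (hw x))
    (tendsto_iff_dist_tendsto_zero.1 (hD.tendsto x))

end KthLargest

theorem exists_forall_nonpos_and_forall_nonneg {ι : Type*} [Finite ι] {d : ι → ℝ → ℝ}
    (hmono : ∀ i, Monotone (d i)) (hzero : ∀ i, ∃ m, d i m = 0) :
    ∃ a b, (∀ i, d i a ≤ 0) ∧ ∀ i, 0 ≤ d i b := by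
  choose m hm using hzero
  obtain ⟨a, ha⟩ := (Set.finite_range m).bddBelow
  obtain ⟨b, hb⟩ := (Set.finite_range m).bddAbove
  refine ⟨a, b, fun i => ?_, fun i => ?_⟩
  · exact (hm i).symm ▸ hmono i (ha (Set.mem_range_self i))
  · exact (hm i).symm ▸ hmono i (hb (Set.mem_range_self i))

theorem ConvexOn.monotone_deriv {φ : ℝ → ℝ} (hconv : ConvexOn ℝ Set.univ φ)
    (hdiff : Differentiable ℝ φ) : Monotone (deriv φ) :=
  monotoneOn_univ.1 (hconv.monotoneOn_deriv fun x _ => hdiff x)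

theorem deriv_eq_zero_of_forall_le {φ : ℝ → ℝ} {x : ℝ} (hx : ∀ y, φ x ≤ φ y) :
    deriv φ x = 0 :=
  IsLocalMin.deriv_eq_zero (Eventually.of_forall hx)

theorem exists_zero_of_middle_rank_gradient_sum_general
    (n f : ℕ) (h : Fin n → ℝ → ℝ)
    (hconv : ∀ i, ConvexOn ℝ Set.univ (h i))
    (hsmooth : ∀ i, ContDiff ℝ 1 (h i))
    (hne : ∀ i, {x : ℝ | ∀ y : ℝ, h i x ≤ h i y}.Nonempty)
    (g : ℕ → ℝ → ℝ)
    (hg : ∀ K, f + 1 ≤ K → K ≤ n - f → ∀ x : ℝ,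
      K ≤ (Finset.univ.filter (fun i => g K x ≤ deriv (h i) x)).card ∧
      (Finset.univ.filter (fun i => g K x < deriv (h i) x)).card < K) :
    ∃ x : ℝ, ∑ K ∈ Finset.Icc (f + 1) (n - f), g K x = 0 := by
  have hrank : ∀ K ∈ Icc (f + 1) (n - f), ∀ x,
      IsKthLargest (fun i => deriv (h i) x) K (g K x) := fun K hK =>
    hg K (mem_Icc.1 hK).1 (mem_Icc.1 hK).2
  obtain ⟨a, b, ha, hb⟩ := exists_forall_nonpos_and_forall_nonneg
    (fun i => (hconv i).monotone_deriv ((hsmooth i).differentiable one_ne_zero))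
    (fun i => (hne i).imp fun _ => deriv_eq_zero_of_forall_le)
  have hcont : Continuous fun x => ∑ K ∈ Icc (f + 1) (n - f), g K x :=
    continuous_finsetSum _ fun K hK => continuous_of_isKthLargest
      (continuous_pi fun i => (hsmooth i).continuous_deriv le_rfl) (hrank K hK)
  have hFa : ∑ K ∈ Icc (f + 1) (n - f), g K a ≤ 0 := sum_nonpos fun K hK =>
    (hrank K hK a).nonpos (by grind) ha
  have hFb : 0 ≤ ∑ K ∈ Icc (f + 1) (n - f), g K b := sum_nonneg fun K hK =>
    (hrank K hK b).nonneg (by simp only [Fintype.card_fin]; grind) hb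
  obtain ⟨x, -, hx⟩ :=
    intermediate_value_uIcc hcont.continuousOn (Set.mem_uIcc.2 (.inl ⟨hFa, hFb⟩))
  exact ⟨x, hx⟩

/-- There is a point where the sum of the middle `n - 2f` ranked derivatives vanishes.
`g K x` is the `K`-th largest value (with multiplicity) of `{h₁'(x), …, hₙ'(x)}`. -/
theorem exists_zero_of_middle_rank_gradient_sum
    (n f : ℕ) (hnf : 3 * f < n) (h : Fin n → ℝ → ℝ)
    (hconv : ∀ i, ConvexOn ℝ Set.univ (h i))
    (hsmooth : ∀ i, ContDiff ℝ 1 (h i))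
    (hne : ∀ i, {x : ℝ | ∀ y : ℝ, h i x ≤ h i y}.Nonempty)
    (hcpt : ∀ i, IsCompact {x : ℝ | ∀ y : ℝ, h i x ≤ h i y})
    (g : ℕ → ℝ → ℝ)
    (hg : ∀ K, f + 1 ≤ K → K ≤ n - f → ∀ x : ℝ,
      K ≤ (Finset.univ.filter (fun i => g K x ≤ deriv (h i) x)).card ∧
      (Finset.univ.filter (fun i => g K x < deriv (h i) x)).card < K) :
    ∃ x : ℝ, ∑ K ∈ Finset.Icc (f + 1) (n - f), g K x = 0 :=
  exists_zero_of_middle_rank_gradient_sum_general n f h hconv hsmooth hne g hg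
end
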